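/- Under the connected sum G #_{e,f} K along same-colored edges e, f of color c, the number of faces satisfies |(G #_{e,f} K)^(2)| = |G^(2)| + |K^(2)| - D: for each of the D colors d ≠ c, the (c,d)-bicolored cycle through e and the (c,d)-bicolored cycle through f merge into a single bicolored cycle, and all other faces are unaffected. -/

import Mathlib

open scoped Classical

structure PreGraph (D : ℕ) where
  W : Type
  B : Type
  E : Type
  [finW : Finite W]
  [finB : Finite B]
  [finE : Finite E]
  src : E → W
  tgt : E → B
  col : E → Fin D

attribute [instance] PreGraph.finW PreGraph.finB PreGraph.finE

namespace PreGraph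

variable {D : ℕ}

/-- A regularly edge-colored bipartite graph: at every white (resp. black) vertex
there is exactly one incident edge of each of the `D` colors. -/
def Regular (G : PreGraph D) : Prop :=
  (∀ w c, ∃! e, G.src e = w ∧ G.col e = c) ∧
  (∀ b c, ∃! e, G.tgt e = b ∧ G.col e = c)

/-- The simple graph on all the vertices of `G` whose edges are the edges of `G`
with color in `S`. -/
def adjOn (G : PreGraph D) (S : Set (Fin D)) : SimpleGraph (G.W ⊕ G.B) where
  Adj v w := ∃ e, G.col e ∈ S ∧
    ((v = Sum.inl (G.src e) ∧ w = Sum.inr (G.tgt e)) ∨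
     (w = Sum.inl (G.src e) ∧ v = Sum.inr (G.tgt e)))
  symm := by
    constructor
    rintro v w ⟨e, hc, h⟩
    exact ⟨e, hc, h.symm⟩
  loopless := by
    constructor
    rintro v ⟨e, hc, (⟨h1, h2⟩ | ⟨h1, h2⟩)⟩ <;> rw [h1] at h2 <;> exact Sum.inl_ne_inr h2

def Connected (G : PreGraph D) : Prop := (G.adjOn Set.univ).Connected

/-- The number of faces (connected components of the `{i,j}`-bicolored subgraph). -/
noncomputable def facesCount (G : PreGraph D) (i j : Fin D) : ℕ :=
  Nat.card ((G.adjOn {i, j}).ConnectedComponent)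

/-- The total number of faces of `G` (over all unordered pairs of colors). -/
noncomputable def totalFaces (G : PreGraph D) : ℕ :=
  ∑ p ∈ Finset.univ.filter (fun p : Fin D × Fin D => p.1 < p.2), G.facesCount p.1 p.2

/-- Number of faces of the jacket associated to a cyclic permutation `σ` of the colors:
the faces of colors `σ^q(0), σ^{q+1}(0)`. -/
noncomputable def jacketFaces (G : PreGraph (D+1)) (σ : Equiv.Perm (Fin (D+1))) : ℕ :=
  ∑ q ∈ Finset.range (D+1), G.facesCount ((σ ^ q) 0) ((σ ^ (q+1)) 0)

/-- The genus of the jacket ribbon graph associated to `σ`, via Euler's formula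
`2 - 2g = V - E + F`. -/
noncomputable def jacketGenus (G : PreGraph (D+1)) (σ : Equiv.Perm (Fin (D+1))) : ℚ :=
  (2 - ((Nat.card G.W : ℚ) + (Nat.card G.B : ℚ)) + (Nat.card G.E : ℚ)
      - (G.jacketFaces σ : ℚ)) / 2

/-- Gurău's degree: the sum of the genera of the `D!/2` jackets of `G`; each jacket
corresponds to a pair `σ, σ⁻¹` of cyclic permutations of the `D+1` colors, whence the
factor `1/2`. -/
noncomputable def gurauDegree (G : PreGraph (D+1)) : ℚ :=
  (1/2) * ∑ σ ∈ Finset.univ.filter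
      (fun σ : Equiv.Perm (Fin (D+1)) => σ.IsCycle ∧ σ.support = Finset.univ),
    G.jacketGenus σ

end PreGraph

/-- The connected sum `G #_{e,f} K`: delete `e` and `f` and add two new edges
`E = (s(e), t(f))` (coded `true`) and `F = (s(f), t(e))` (coded `false`), both of the
color of `e`. -/
noncomputable def connSum {D : ℕ} (G K : PreGraph D) (e : G.E) (f : K.E) :
    PreGraph D where
  W := G.W ⊕ K.W
  B := G.B ⊕ K.B
  E := {e' : G.E // e' ≠ e} ⊕ ({f' : K.E // f' ≠ f} ⊕ Bool)
  src := fun x => match x with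
    | .inl e' => .inl (G.src e'.1)
    | .inr (.inl f') => .inr (K.src f'.1)
    | .inr (.inr true) => .inl (G.src e)
    | .inr (.inr false) => .inr (K.src f)
  tgt := fun x => match x with
    | .inl e' => .inl (G.tgt e'.1)
    | .inr (.inl f') => .inr (K.tgt f'.1)
    | .inr (.inr true) => .inr (K.tgt f)
    | .inr (.inr false) => .inl (G.tgt e)
  col := fun x => match x with
    | .inl e' => G.col e'.1
    | .inr (.inl f') => K.col f'.1
    | .inr (.inr _) => G.col e

/-!
For colors `i, j` both different from the gluing color `c`, the `{i,j}`-subgraph of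
`G #_{e,f} K` is literally that of the disjoint union `G ⊔ K`, so faces simply add up.

For colors `{c, d}`, the connected sum and `G ⊔ K` plus the single new edge `(s(e), t(f))` have
the same connected components. Indeed, the second new edge `(s(f), t(e))` is bypassed in `G ⊔ K`
by `f`, the new edge and `e`; conversely `e` is bypassed in the connected sum by the two new edges
and the `(c,d)`-cycle of `K` through `f`, which stays connected after deleting `f` since the
`(c,d)`-subgraph of a regular graph is a disjoint union of cycles (symmetrically for `f`).
Adding one edge between the two halves of `G ⊔ K` merges exactly two components, whence the `+ 1`.
Summing over pairs of colors, exactly `D` pairs contain `c`.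
-/

namespace SimpleGraph

variable {V W : Type*}

theorem Reachable.eq_of_forall_adj {α : Sort*} {H : SimpleGraph V} {f : V → α}
    (hf : ∀ x y, H.Adj x y → f x = f y) {u v : V} (huv : H.Reachable u v) : f u = f v := by
  obtain ⟨p⟩ := huv
  induction p with
  | nil => rfl
  | cons hadj _ ih => exact (hf _ _ hadj).trans ih

theorem Reachable.of_forall_adj_reachable {H H' : SimpleGraph V}
    (h : ∀ x y, H.Adj x y → H'.Reachable x y) {u v : V} (huv : H.Reachable u v) :
    H'.Reachable u v :=
  ConnectedComponent.eq.mp <|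
    huv.eq_of_forall_adj fun x y hxy => ConnectedComponent.eq.mpr (h x y hxy)

theorem card_connectedComponent_eq_of_forall_adj_reachable {H H' : SimpleGraph V}
    (h : ∀ x y, H.Adj x y → H'.Reachable x y) (h' : ∀ x y, H'.Adj x y → H.Reachable x y) :
    Nat.card H.ConnectedComponent = Nat.card H'.ConnectedComponent :=
  Nat.card_congr <| Quot.congrRight fun _ _ =>
    ⟨Reachable.of_forall_adj_reachable h, Reachable.of_forall_adj_reachable h'⟩

theorem card_connectedComponent_sup_edge_add_one [Finite V] {H : SimpleGraph V} {u v : V}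
    (huv : ¬H.Reachable u v) :
    Nat.card (H ⊔ edge u v).ConnectedComponent + 1 = Nat.card H.ConnectedComponent := by
  -- retract the components of `H ⊔ edge u v` to those of `H` other than the one of `v`
  let r : V → H.ConnectedComponent := fun x =>
    if H.Reachable x v then H.connectedComponentMk u else H.connectedComponentMk x
  have hr : ∀ x y, (H ⊔ edge u v).Adj x y → r x = r y := by
    rintro x y (hxy | hxy)
    · have : H.Reachable x v ↔ H.Reachable y v :=
        ⟨hxy.symm.reachable.trans, hxy.reachable.trans⟩
      simp only [r, this, ConnectedComponent.eq.mpr hxy.reachable]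
    · obtain ⟨⟨rfl, rfl⟩ | ⟨rfl, rfl⟩, -⟩ := (edge_adj _ _ _ _).mp hxy <;> simp [r]
  have hr_ne (x : V) : r x ≠ H.connectedComponentMk v := by
    by_cases hx : H.Reachable x v <;> simp [r, hx, huv]
  have huv' : (H ⊔ edge u v).Reachable u v :=
    (show (H ⊔ edge u v).Adj u v by simp [edge_adj, show u ≠ v by rintro rfl; exact huv .rfl])
      |>.reachable
  let equiv : (H ⊔ edge u v).ConnectedComponent ≃
      {C : H.ConnectedComponent // C ≠ H.connectedComponentMk v} :=
    { toFun := Quot.lift (fun x => ⟨r x, hr_ne x⟩) fun _ _ hxy =>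
        Subtype.ext (hxy.eq_of_forall_adj hr)
      invFun C := C.1.map (Hom.ofLE le_sup_left)
      left_inv C := by
        induction C using ConnectedComponent.ind with
        | _ x =>
          change (r x).map (Hom.ofLE le_sup_left) = (H ⊔ edge u v).connectedComponentMk x
          by_cases hx : H.Reachable x v
          · simpa [r, hx] using
              ConnectedComponent.sound <| huv'.trans (hx.mono le_sup_left).symm
          · simp [r, hx]
      right_inv := by
        rintro ⟨C, hC⟩
        induction C using ConnectedComponent.ind with
        | _ x =>
          have hx : ¬H.Reachable x v := fun h => hC (ConnectedComponent.sound h)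
          exact Subtype.ext (show r x = _ by simp [r, hx]) }
  rw [Nat.card_congr equiv, ← Finite.card_option, Nat.card_congr (Equiv.optionSubtypeNe _)]

def connectedComponentSumEquiv (G : SimpleGraph V) (H : SimpleGraph W) :
    (G ⊕g H).ConnectedComponent ≃ G.ConnectedComponent ⊕ H.ConnectedComponent where
  toFun := Quot.lift (Sum.map G.connectedComponentMk H.connectedComponentMk) fun _ _ =>
    Reachable.eq_of_forall_adj fun
      | .inl _, .inl _, h => congrArg Sum.inl (ConnectedComponent.sound (Adj.reachable h))
      | .inr _, .inr _, h => congrArg Sum.inr (ConnectedComponent.sound (Adj.reachable h))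
  invFun := Sum.elim (ConnectedComponent.map Embedding.sumInl.toHom)
    (ConnectedComponent.map Embedding.sumInr.toHom)
  left_inv C := by
    induction C using ConnectedComponent.ind with
    | _ v => rcases v with v | v <;> rfl
  right_inv C := by
    rcases C with C | C <;> induction C using ConnectedComponent.ind <;> rfl

theorem card_connectedComponent_sum [Finite V] [Finite W] (G : SimpleGraph V)
    (H : SimpleGraph W) :
    Nat.card (G ⊕g H).ConnectedComponent =
      Nat.card G.ConnectedComponent + Nat.card H.ConnectedComponent := by
  rw [Nat.card_congr (connectedComponentSumEquiv G H), Nat.card_sum]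

end SimpleGraph

open Finset in
theorem Fin.card_filter_lt_and_eq_or_eq {n : ℕ} (c : Fin (n + 1)) :
    #{p : Fin (n + 1) × Fin (n + 1) | p.1 < p.2 ∧ (p.1 = c ∨ p.2 = c)} = n := by
  have h : ({p : Fin (n + 1) × Fin (n + 1) | p.1 < p.2 ∧ (p.1 = c ∨ p.2 = c)} : Finset _) =
      (Ioi c).map (Function.Embedding.sectR c _) ∪
        (Iio c).map (Function.Embedding.sectL _ c) := by
    ext ⟨a, b⟩
    simp only [mem_filter, mem_univ, true_and, mem_union, mem_map, mem_Ioi, mem_Iio,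
      Function.Embedding.sectR_apply, Function.Embedding.sectL_apply, Prod.mk.injEq]
    grind
  rw [h, card_union_of_disjoint, card_map, card_map, Fin.card_Ioi, Fin.card_Iio]
  · omega
  · simp only [disjoint_left, mem_map, mem_Ioi, mem_Iio, Function.Embedding.sectR_apply,
      Function.Embedding.sectL_apply]
    grind

namespace PreGraph

open SimpleGraph

variable {D : ℕ}

theorem facesCount_comm (G : PreGraph D) (i j : Fin D) :
    G.facesCount i j = G.facesCount j i := by
  rw [facesCount, facesCount, Set.pair_comm]

theorem adjOn_adj_of_col_mem (P : PreGraph D) {S : Set (Fin D)} {x : P.E}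
    (hx : P.col x ∈ S) : (P.adjOn S).Adj (.inl (P.src x)) (.inr (P.tgt x)) :=
  ⟨x, hx, .inl ⟨rfl, rfl⟩⟩

theorem adjOn_le_iff {P : PreGraph D} {S : Set (Fin D)} {Y : SimpleGraph (P.W ⊕ P.B)} :
    P.adjOn S ≤ Y ↔ ∀ x, P.col x ∈ S → Y.Adj (.inl (P.src x)) (.inr (P.tgt x)) :=
  ⟨fun h x hx => h (P.adjOn_adj_of_col_mem hx), by
    rintro h v w ⟨x, hx, ⟨rfl, rfl⟩ | ⟨rfl, rfl⟩⟩
    exacts [h x hx, (h x hx).symm]⟩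

theorem reachable_of_adjOn_adj {P : PreGraph D} {S : Set (Fin D)}
    {Y : SimpleGraph (P.W ⊕ P.B)}
    (h : ∀ x, P.col x ∈ S → Y.Reachable (.inl (P.src x)) (.inr (P.tgt x)))
    {v w : P.W ⊕ P.B} (hvw : (P.adjOn S).Adj v w) : Y.Reachable v w := by
  obtain ⟨x, hx, ⟨rfl, rfl⟩ | ⟨rfl, rfl⟩⟩ := hvw
  exacts [h x hx, (h x hx).symm]

section Regular

variable {G : PreGraph D}

noncomputable def Regular.srcEquiv (hG : G.Regular) (c : Fin D) :
    {x : G.E // G.col x = c} ≃ G.W :=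
  Equiv.ofBijective (fun x => G.src x)
    ⟨fun x y h => Subtype.ext ((hG.1 _ c).unique ⟨h, x.2⟩ ⟨rfl, y.2⟩),
      fun w => let ⟨x, ⟨hs, hc⟩, _⟩ := hG.1 w c; ⟨⟨x, hc⟩, hs⟩⟩

noncomputable def Regular.tgtEquiv (hG : G.Regular) (c : Fin D) :
    {x : G.E // G.col x = c} ≃ G.B :=
  Equiv.ofBijective (fun x => G.tgt x)
    ⟨fun x y h => Subtype.ext ((hG.2 _ c).unique ⟨h, x.2⟩ ⟨rfl, y.2⟩),
      fun b => let ⟨x, ⟨hs, hc⟩, _⟩ := hG.2 b c; ⟨⟨x, hc⟩, hs⟩⟩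

/-- One step along the `(c,d)`-bicolored cycles: leave a white vertex by its `c`-edge and come
back to a white vertex by the `d`-edge. -/
noncomputable def Regular.facePerm (hG : G.Regular) (c d : Fin D) : Equiv.Perm G.W :=
  (hG.srcEquiv c).symm.trans ((hG.tgtEquiv c).trans ((hG.tgtEquiv d).symm.trans (hG.srcEquiv d)))

/-- The `(c,d)`-face through `f₀` is a cycle, so its other edges still join the endpoints of
`f₀`: iterate `facePerm` from `s(f₀)` until it comes back. -/
theorem Regular.reachable_tgt_src (hG : G.Regular) {c d : Fin D} (hd : d ≠ c) {f₀ : G.E}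
    (hc : G.col f₀ = c) {V : Type*} {H : SimpleGraph V} (ι : G.W ⊕ G.B → V)
    (hH : ∀ x, x ≠ f₀ → G.col x ∈ ({c, d} : Set (Fin D)) →
      H.Adj (ι (.inl (G.src x))) (ι (.inr (G.tgt x)))) :
    H.Reachable (ι (.inr (G.tgt f₀))) (ι (.inl (G.src f₀))) := by
  set σ := hG.facePerm c d
  set w₀ := G.src f₀
  let edgeC (w : G.W) : G.E := ((hG.srcEquiv c).symm w).1
  have hd_step (w : G.W) : H.Adj (ι (.inl (σ w))) (ι (.inr (G.tgt (edgeC w)))) := by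
    let y := (hG.tgtEquiv d).symm (G.tgt (edgeC w))
    have hy : G.tgt y.1 = G.tgt (edgeC w) := (hG.tgtEquiv d).apply_symm_apply _
    rw [← hy]
    exact hH y.1 (fun h => hd (y.2.symm.trans ((congrArg G.col h).trans hc))) (by simp [y.2])
  have hc_step (w : G.W) (hw : w ≠ w₀) : H.Adj (ι (.inl w)) (ι (.inr (G.tgt (edgeC w)))) := by
    have hx : G.src (edgeC w) = w := (hG.srcEquiv c).apply_symm_apply w
    conv_lhs => rw [← hx]
    exact hH _ (fun h => hw (hx.symm.trans (congrArg G.src h)))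
      (by simp [edgeC, ((hG.srcEquiv c).symm w).2])
  have hf₀ : edgeC w₀ = f₀ :=
    congrArg Subtype.val (((hG.srcEquiv c).symm_apply_eq (y := ⟨f₀, hc⟩)).mpr rfl)
  have hfirst : H.Reachable (ι (.inr (G.tgt f₀))) (ι (.inl (σ w₀))) := by
    simpa [hf₀] using (hd_step w₀).symm.reachable
  have hreach : ∀ n, H.Reachable (ι (.inr (G.tgt f₀))) (ι (.inl ((σ ^ (n + 1)) w₀))) := by
    intro n
    induction n with
    | zero => simpa using hfirst
    | succ n ih =>
      rw [pow_succ', Equiv.Perm.mul_apply]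
      by_cases hw : (σ ^ (n + 1)) w₀ = w₀
      · rwa [hw]
      · exact ih.trans ((hc_step _ hw).reachable.trans (hd_step _).symm.reachable)
  obtain ⟨n, hn⟩ := Nat.exists_eq_add_one.mpr (orderOf_pos σ)
  simpa [← hn, pow_orderOf_eq_one] using hreach n

end Regular

abbrev sum (G K : PreGraph D) : PreGraph D where
  W := G.W ⊕ K.W
  B := G.B ⊕ K.B
  E := G.E ⊕ K.E
  src := Sum.map G.src K.src
  tgt := Sum.map G.tgt K.tgt
  col := Sum.elim G.col K.col

def sumAdjOnIso (G K : PreGraph D) (S : Set (Fin D)) :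
    (G.sum K).adjOn S ≃g G.adjOn S ⊕g K.adjOn S where
  toEquiv := Equiv.sumSumSumComm G.W K.W G.B K.B
  map_rel_iff' := by
    rintro ((v | v) | (v | v)) ((w | w) | (w | w)) <;> simp [adjOn]

theorem card_connectedComponent_sum_adjOn (G K : PreGraph D) (S : Set (Fin D)) :
    Nat.card ((G.sum K).adjOn S).ConnectedComponent =
      Nat.card (G.adjOn S).ConnectedComponent + Nat.card (K.adjOn S).ConnectedComponent := by
  rw [Nat.card_congr (sumAdjOnIso G K S).connectedComponentEquiv, card_connectedComponent_sum]

theorem not_reachable_sum_adjOn (G K : PreGraph D) (S : Set (Fin D)) (w : G.W) (b : K.B) :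
    ¬((G.sum K).adjOn S).Reachable (.inl (Sum.inl w)) (.inr (Sum.inr b)) := fun h =>
  not_reachable_sum_inl_inr (Sum.inl w) (Sum.inr b) ((sumAdjOnIso G K S).reachable_iff.mpr h)

end PreGraph

open PreGraph SimpleGraph

section ConnSum

variable {D : ℕ} {G K : PreGraph D} {e : G.E} {f : K.E} {c : Fin D}

theorem connSum_adjOn_eq_sum_adjOn (hce : G.col e = c) (hcf : K.col f = c)
    {S : Set (Fin D)} (hS : c ∉ S) : (connSum G K e f).adjOn S = (G.sum K).adjOn S := by
  refine le_antisymm (adjOn_le_iff.mpr ?_) (adjOn_le_iff.mpr ?_)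
  · rintro (⟨x, _⟩ | ⟨y, _⟩ | _) hx
    · exact (G.sum K).adjOn_adj_of_col_mem (x := Sum.inl x) hx
    · exact (G.sum K).adjOn_adj_of_col_mem (x := Sum.inr y) hx
    · exact absurd (hce ▸ hx) hS
  · rintro (x | y) hx
    · have hxe : x ≠ e := by rintro rfl; exact hS (hce ▸ hx)
      exact (connSum G K e f).adjOn_adj_of_col_mem (x := Sum.inl ⟨x, hxe⟩) hx
    · have hyf : y ≠ f := by rintro rfl; exact hS (hcf ▸ hx)
      exact (connSum G K e f).adjOn_adj_of_col_mem (x := Sum.inr (Sum.inl ⟨y, hyf⟩)) hx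

theorem reachable_sum_adjOn_sup_edge_of_connSum_adj (hce : G.col e = c) (hcf : K.col f = c)
    {S : Set (Fin D)} (hS : c ∈ S) {v w : (connSum G K e f).W ⊕ (connSum G K e f).B}
    (hvw : ((connSum G K e f).adjOn S).Adj v w) :
    ((G.sum K).adjOn S ⊔
      edge (Sum.inl (Sum.inl (G.src e))) (Sum.inr (Sum.inr (K.tgt f)))).Reachable v w := by
  have hsum {x : (G.sum K).E} (hx : (G.sum K).col x ∈ S) :=
    (((G.sum K).adjOn_adj_of_col_mem hx).reachable.mono
      (le_sup_left (b := edge (Sum.inl (Sum.inl (G.src e))) (Sum.inr (Sum.inr (K.tgt f))))))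
  have hedge : ((G.sum K).adjOn S ⊔
      edge (Sum.inl (Sum.inl (G.src e))) (Sum.inr (Sum.inr (K.tgt f)))).Adj
      (Sum.inl (Sum.inl (G.src e))) (Sum.inr (Sum.inr (K.tgt f))) := Or.inr (by simp [edge_adj])
  refine reachable_of_adjOn_adj (P := connSum G K e f) ?_ hvw
  rintro (⟨x, _⟩ | ⟨y, _⟩ | _ | _) hx
  · exact hsum (x := Sum.inl x) hx
  · exact hsum (x := Sum.inr y) hx
  · exact (hsum (x := Sum.inr f) (hcf ▸ hS)).trans
      (hedge.symm.reachable.trans (hsum (x := Sum.inl e) (hce ▸ hS)))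
  · exact hedge.reachable

theorem reachable_connSum_adjOn_of_sum_adjOn_sup_edge_adj (hG : G.Regular) (hK : K.Regular)
    (hce : G.col e = c) (hcf : K.col f = c) {d : Fin D} (hd : d ≠ c)
    {v w : (G.sum K).W ⊕ (G.sum K).B}
    (hvw : ((G.sum K).adjOn {c, d} ⊔
      edge (Sum.inl (Sum.inl (G.src e))) (Sum.inr (Sum.inr (K.tgt f)))).Adj v w) :
    ((connSum G K e f).adjOn {c, d}).Reachable v w := by
  set H := (connSum G K e f).adjOn {c, d}
  have hcS : c ∈ ({c, d} : Set (Fin D)) := Set.mem_insert c _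
  have hnew : H.Adj (Sum.inl (Sum.inl (G.src e))) (Sum.inr (Sum.inr (K.tgt f))) :=
    (connSum G K e f).adjOn_adj_of_col_mem (x := Sum.inr (Sum.inr true)) (hce ▸ hcS)
  have hnew' : H.Adj (Sum.inl (Sum.inr (K.src f))) (Sum.inr (Sum.inl (G.tgt e))) :=
    (connSum G K e f).adjOn_adj_of_col_mem (x := Sum.inr (Sum.inr false)) (hce ▸ hcS)
  have hpathK : H.Reachable (Sum.inr (Sum.inr (K.tgt f))) (Sum.inl (Sum.inr (K.src f))) :=
    hK.reachable_tgt_src hd hcf (Sum.map Sum.inr Sum.inr) fun y hy hyS =>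
      (connSum G K e f).adjOn_adj_of_col_mem (x := Sum.inr (Sum.inl ⟨y, hy⟩)) hyS
  have hpathG : H.Reachable (Sum.inr (Sum.inl (G.tgt e))) (Sum.inl (Sum.inl (G.src e))) :=
    hG.reachable_tgt_src hd hce (Sum.map Sum.inl Sum.inl) fun x hx hxS =>
      (connSum G K e f).adjOn_adj_of_col_mem (x := Sum.inl ⟨x, hx⟩) hxS
  rcases hvw with hvw | hvw
  · refine reachable_of_adjOn_adj (P := G.sum K) ?_ hvw
    rintro (x | y) hx
    · by_cases hxe : x = e
      · subst hxe
        exact hnew.reachable.trans (hpathK.trans hnew'.reachable)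
      · exact ((connSum G K e f).adjOn_adj_of_col_mem (x := Sum.inl ⟨x, hxe⟩) hx).reachable
    · by_cases hyf : y = f
      · subst hyf
        exact hnew'.reachable.trans (hpathG.trans hnew.reachable)
      · exact ((connSum G K e f).adjOn_adj_of_col_mem
          (x := Sum.inr (Sum.inl ⟨y, hyf⟩)) hx).reachable
  · obtain ⟨⟨rfl, rfl⟩ | ⟨rfl, rfl⟩, -⟩ := (edge_adj _ _ _ _).mp hvw
    exacts [hnew.reachable, hnew.symm.reachable]

theorem card_connectedComponent_connSum_adjOn (hG : G.Regular) (hK : K.Regular)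
    (hce : G.col e = c) (hcf : K.col f = c) {d : Fin D} (hd : d ≠ c) :
    Nat.card ((connSum G K e f).adjOn {c, d}).ConnectedComponent =
      Nat.card ((G.sum K).adjOn {c, d} ⊔
        edge (Sum.inl (Sum.inl (G.src e))) (Sum.inr (Sum.inr (K.tgt f)))).ConnectedComponent :=
  card_connectedComponent_eq_of_forall_adj_reachable
    (fun _ _ => reachable_sum_adjOn_sup_edge_of_connSum_adj hce hcf (Set.mem_insert c _))
    (fun _ _ => reachable_connSum_adjOn_of_sum_adjOn_sup_edge_adj hG hK hce hcf hd)

theorem connSum_facesCount_add_one (hG : G.Regular) (hK : K.Regular) (hce : G.col e = c)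
    (hcf : K.col f = c) {d : Fin D} (hd : d ≠ c) :
    (connSum G K e f).facesCount c d + 1 = G.facesCount c d + K.facesCount c d := by
  rw [facesCount, card_connectedComponent_connSum_adjOn hG hK hce hcf hd,
    card_connectedComponent_sup_edge_add_one (not_reachable_sum_adjOn G K _ _ _),
    card_connectedComponent_sum_adjOn, facesCount, facesCount]

theorem connSum_facesCount (hce : G.col e = c) (hcf : K.col f = c) {i j : Fin D}
    (hi : i ≠ c) (hj : j ≠ c) :
    (connSum G K e f).facesCount i j = G.facesCount i j + K.facesCount i j := by
  rw [facesCount, connSum_adjOn_eq_sum_adjOn hce hcf (by simp [hi.symm, hj.symm])]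
  exact card_connectedComponent_sum_adjOn G K _

open Finset in
theorem totalFaces_connSum {G K : PreGraph (D + 1)} {e : G.E} {f : K.E} (hG : G.Regular)
    (hK : K.Regular) (hcol : G.col e = K.col f) :
    (connSum G K e f).totalFaces + D = G.totalFaces + K.totalFaces := by
  set c := G.col e
  have key : ∀ p ∈ ({p : Fin (D + 1) × Fin (D + 1) | p.1 < p.2} : Finset _),
      (connSum G K e f).facesCount p.1 p.2 + (if p.1 = c ∨ p.2 = c then 1 else 0) =
        G.facesCount p.1 p.2 + K.facesCount p.1 p.2 := by
    rintro ⟨i, j⟩ hij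
    simp only [mem_filter, mem_univ, true_and] at hij
    split_ifs with h
    · rcases h with rfl | rfl
      · exact connSum_facesCount_add_one hG hK rfl hcol.symm hij.ne'
      · simpa only [facesCount_comm _ i] using
          connSum_facesCount_add_one hG hK rfl hcol.symm hij.ne
    · rw [not_or] at h
      exact connSum_facesCount rfl hcol.symm h.1 h.2
  calc (connSum G K e f).totalFaces + D
      = ∑ p ∈ ({p : Fin (D + 1) × Fin (D + 1) | p.1 < p.2} : Finset _),
          ((connSum G K e f).facesCount p.1 p.2 + if p.1 = c ∨ p.2 = c then 1 else 0) := by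
        rw [sum_add_distrib, sum_boole, filter_filter, Nat.cast_id,
          Fin.card_filter_lt_and_eq_or_eq c, totalFaces]
    _ = G.totalFaces + K.totalFaces := by rw [sum_congr rfl key, sum_add_distrib]; rfl

end ConnSum

theorem facesCount_connSum_general (D : ℕ) (G K : PreGraph (D+1))
    (hGreg : G.Regular) (hKreg : K.Regular)
    (e : G.E) (f : K.E) (hcol : G.col e = K.col f) :
    (∀ d : Fin (D+1), d ≠ G.col e →
        (connSum G K e f).facesCount (G.col e) d + 1 =
          G.facesCount (G.col e) d + K.facesCount (K.col f) d) ∧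
    (∀ i j : Fin (D+1), i ≠ G.col e → j ≠ G.col e →
        (connSum G K e f).facesCount i j = G.facesCount i j + K.facesCount i j) ∧
    (connSum G K e f).totalFaces + D = G.totalFaces + K.totalFaces :=
  ⟨fun _ hd => hcol ▸ connSum_facesCount_add_one hGreg hKreg rfl hcol.symm hd,
    fun _ _ hi hj => connSum_facesCount rfl hcol.symm hi hj,
    totalFaces_connSum hGreg hKreg hcol⟩

/-- Under the connected sum along two edges of the same color `c`,
for each color `d ≠ c` the `(c,d)`-bicolored cycle through `e` and the one through `f`
merge into a single face, all other faces are unaffected, and hence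
`|(G #_{e,f} K)⁽²⁾| = |G⁽²⁾| + |K⁽²⁾| - D`. -/
theorem facesCount_connSum (D : ℕ) (G K : PreGraph (D+1))
    (hGreg : G.Regular) (hKreg : K.Regular)
    (hGconn : G.Connected) (hKconn : K.Connected)
    (e : G.E) (f : K.E) (hcol : G.col e = K.col f) :
    (∀ d : Fin (D+1), d ≠ G.col e →
        (connSum G K e f).facesCount (G.col e) d + 1 =
          G.facesCount (G.col e) d + K.facesCount (K.col f) d) ∧
    (∀ i j : Fin (D+1), i ≠ G.col e → j ≠ G.col e →
        (connSum G K e f).facesCount i j = G.facesCount i j + K.facesCount i j) ∧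
    (connSum G K e f).totalFaces + D = G.totalFaces + K.totalFaces :=
  facesCount_connSum_general D G K hGreg hKreg e f hcol
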